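/- arXiv:2501.03543 — 3 statements merged into one kernel-verified Lean document; each statement's English description precedes it below -/
import Mathlib

section
/- Fix X ∈ ℝ^d, sample points ξ^1,…,ξ^S ∈ Ξ, ε ∈ (0,1] and r > 0, and let Ξ*(X) := {ξ ∈ Ξ : h̄(X,ξ) = h̄*(X)} be the (nonempty) set of maximizers of h̄(X,·) over Ξ. Then the supremum sup_{P'∈D_r(P̂_S)} q_{1−ε}(h̄(X,·), P') is attained by some probability measure P* ∈ D_r(P̂_S) whose support is contained in the finite union {ξ^1,…,ξ^S} ∪ Ξ*(X). -/
open MeasureTheory Finset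
open scoped ENNReal NNReal

noncomputable section

open Classical in
/-- Relative entropy `I(μ,ν)`: `∫ log(dμ/dν) dμ` if `μ ≪ ν`, and `+∞` otherwise. -/
def relEntropy {α : Type*} [MeasurableSpace α] (μ ν : Measure α) : EReal :=
  if μ ≪ ν then ((∫ x, Real.log (μ.rnDeriv ν x).toReal ∂μ : ℝ) : EReal) else ⊤

/-- The ambiguity set `D_r(P)`: Borel probability measures supported in `Ξ`
with `I(P, P') ≤ r`. -/
def ambiguity {α : Type*} [MeasurableSpace α] (Ξ : Set α) (r : ℝ) (P : Measure α) :
    Set (Measure α) :=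
  {P' | IsProbabilityMeasure P' ∧ P' Ξᶜ = 0 ∧ relEntropy P P' ≤ (r : EReal)}

/-- Empirical distribution of the sample points `ξ^1, …, ξ^S`. -/
def empirical {α : Type*} [MeasurableSpace α] {S : ℕ} (ξ : Fin S → α) : Measure α :=
  (S : ℝ≥0∞)⁻¹ • ∑ j, Measure.dirac (ξ j)

/-- `h̄(X, ξ) = max_{ℓ ∈ [m]} h_ℓ(X, ξ)`. -/
def hbarF {d n m : ℕ} [NeZero m] (h : (Fin d → ℝ) → (Fin n → ℝ) → Fin m → ℝ)
    (X : Fin d → ℝ) (ζ : Fin n → ℝ) : ℝ :=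
  Finset.univ.sup' Finset.univ_nonempty fun ℓ => h X ζ ℓ

/-- `h̄*(X) = max_{ξ ∈ Ξ} h̄(X, ξ)`. -/
def hstarF {d n m : ℕ} [NeZero m] (Ξ : Set (Fin n → ℝ))
    (h : (Fin d → ℝ) → (Fin n → ℝ) → Fin m → ℝ) (X : Fin d → ℝ) : ℝ :=
  sSup (hbarF h X '' Ξ)

/-- Feasibility of the optimization problem (★) at the integer `k`. -/
def StarFeasible (S : ℕ) (ε r : ℝ) (k : ℕ) : Prop :=
  1 ≤ k ∧ k ≤ S ∧ ∃ p : Fin (S + 1) → ℝ,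
    (∀ j, 0 ≤ p j) ∧ (∀ j : Fin (S + 1), (j : ℕ) < S → 0 < p j) ∧ (∑ j, p j) = 1 ∧
    (∑ j ∈ Finset.univ.filter (fun j : Fin (S + 1) => (j : ℕ) < k), p j) ≤ 1 - ε ∧
    -(1 / (S : ℝ)) * ∑ j ∈ Finset.univ.filter (fun j : Fin (S + 1) => (j : ℕ) < S),
      Real.log ((S : ℝ) * p j) ≤ r

/-- `k(ε, r, S)`: the optimal value of problem (★). -/
def kStar (S : ℕ) (ε r : ℝ) : ℕ := sSup {k | StarFeasible S ε r k}

/-- The `k`-th smallest element (counted with multiplicity) of the multiset of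
values of `v`. -/
def kthSmallest {N : ℕ} (v : Fin N → ℝ) (k : ℕ) : ℝ :=
  (Multiset.sort (Multiset.ofList (List.ofFn v)) (· ≤ ·)).getD (k - 1) 0

/-- The `α`-quantile `q_α(F, P) = sup {q | P({ξ : F(ξ) ≤ q}) ≤ α}`. -/
def quantile {α : Type*} [MeasurableSpace α] (a : ℝ) (F : α → ℝ) (P : Measure α) : ℝ :=
  sSup {q : ℝ | P {x | F x ≤ q} ≤ ENNReal.ofReal a}

/-!
Replace each `P' ∈ D_r(P̂_S)` by the measure that agrees with `P'` on the sample points and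
puts all remaining mass on a maximiser `x₀` of `h̄(X,·)` over `Ξ`. The atoms at the sample
points can only grow, and `I(P̂_S, ·)` depends on nothing else, so the new measure stays in
`D_r(P̂_S)`. Every `q` with `P'(h̄ ≤ q) ≤ 1 - ε < 1` lies below `h̄(X, x₀)`, so the moved mass
never enters the relevant sublevel sets and the quantile does not decrease. The new measures
live on the finite set `{ξ^j} ∪ {x₀}`, where the quantile only takes values of `h̄(X,·)`;
hence the supremum over them is a maximum.
-/

def quantileSet {α : Type*} [MeasurableSpace α] (a : ℝ) (F : α → ℝ) (P : Measure α) : Set ℝ :=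
  {q : ℝ | P {x | F x ≤ q} ≤ ENNReal.ofReal a}

def collapseOutside {α : Type*} [MeasurableSpace α] (R : Set α) (x₀ : α) (ν : Measure α) :
    Measure α :=
  ν.restrict R + (1 - ν R) • Measure.dirac x₀

section Quantile

variable {α : Type*} [MeasurableSpace α] {a : ℝ} {F : α → ℝ} {μ : Measure α}

theorem quantileSet_nonempty_of_ae_le {m : ℝ} (h : ∀ᵐ x ∂μ, m ≤ F x) :
    (quantileSet a F μ).Nonempty := by
  refine ⟨m - 1, ?_⟩
  have hnull : μ {x | F x ≤ m - 1} = 0 :=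
    measure_eq_zero_iff_ae_notMem.2 (h.mono fun x hx (hle : F x ≤ m - 1) => by linarith)
  simp [quantileSet, hnull]

theorem lt_of_mem_quantileSet [IsProbabilityMeasure μ] {M q : ℝ} (ha : a < 1)
    (h : ∀ᵐ x ∂μ, F x ≤ M) (hq : q ∈ quantileSet a F μ) : q < M := by
  by_contra! hMq
  have hone : (1 : ℝ≥0∞) ≤ μ {x | F x ≤ q} := by
    rw [← measure_univ (μ := μ)]
    exact measure_mono_ae (h.mono fun x hx _ => hx.trans hMq)
  exact (ENNReal.ofReal_lt_one.2 ha).not_ge (hone.trans hq)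

theorem bddAbove_quantileSet [IsProbabilityMeasure μ] {M : ℝ} (ha : a < 1)
    (h : ∀ᵐ x ∂μ, F x ≤ M) : BddAbove (quantileSet a F μ) :=
  ⟨M, fun _ hq => (lt_of_mem_quantileSet ha h hq).le⟩

/-- On a finite set `K` of full measure, `q ↦ μ {F ≤ q}` is locally constant off `F '' K`,
so the supremum defining the quantile cannot fall strictly between two values of `F` on `K`. -/
theorem quantile_mem_image_of_ae_mem {K : Set α} (hK : K.Finite) (hμK : ∀ᵐ x ∂μ, x ∈ K)
    (hne : (quantileSet a F μ).Nonempty) (hbdd : BddAbove (quantileSet a F μ)) :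
    quantile a F μ ∈ F '' K := by
  set t := quantile a F μ
  by_contra ht
  obtain ⟨δ, hδ, hball⟩ :=
    Metric.isOpen_iff.1 (hK.image F).isClosed.isOpen_compl t ht
  obtain ⟨q, hq, htq⟩ := exists_lt_of_lt_csSup hne (show t - δ < t by linarith)
  have hmem : t + δ / 2 ∈ quantileSet a F μ := by
    refine le_trans (measure_mono_ae (hμK.mono fun x hxK (hx : F x ≤ t + δ / 2) => ?_)) hq
    change F x ≤ q
    by_contra! hqx
    refine hball ?_ ⟨x, hxK, rfl⟩
    rw [Metric.mem_ball, Real.dist_eq, abs_lt]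
    constructor <;> linarith
  have hle : t + δ / 2 ≤ t := le_csSup hbdd hmem
  linarith

end Quantile

section Empirical

variable {α : Type*} [MeasurableSpace α] {S : ℕ}

theorem absolutelyContinuous_of_relEntropy_le {μ ν : Measure α} {r : ℝ}
    (h : relEntropy μ ν ≤ r) : μ ≪ ν := by
  by_contra hac
  rw [relEntropy, if_neg hac, top_le_iff] at h
  exact EReal.coe_ne_top r h

theorem empirical_apply (ξ : Fin S → α) (s : Set α) :
    empirical ξ s = (S : ℝ≥0∞)⁻¹ * ∑ j, Measure.dirac (ξ j) s := by
  rw [empirical, Measure.smul_apply, Measure.finsetSum_apply, smul_eq_mul]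

theorem isProbabilityMeasure_empirical (hS : S ≠ 0) (ξ : Fin S → α) :
    IsProbabilityMeasure (empirical ξ) :=
  ⟨by simp [empirical_apply, ENNReal.inv_mul_cancel, hS]⟩

variable [MeasurableSingletonClass α]

theorem integral_empirical (ξ : Fin S → α) (f : α → ℝ) :
    ∫ x, f x ∂(empirical ξ) = (S : ℝ)⁻¹ * ∑ j, f (ξ j) := by
  rw [empirical, integral_smul_measure,
    integral_finsetSum_measure fun j _ => integrable_dirac enorm_lt_top]
  simp [integral_dirac, smul_eq_mul]

theorem empirical_singleton_ne_zero (ξ : Fin S → α) (j : Fin S) :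
    empirical ξ {ξ j} ≠ 0 := by
  rw [empirical_apply]
  refine mul_ne_zero (by simp) (ne_of_gt ?_)
  calc (0 : ℝ≥0∞) < Measure.dirac (ξ j) {ξ j} := by simp
    _ ≤ ∑ i, Measure.dirac (ξ i) {ξ j} :=
      Finset.single_le_sum (f := fun i => Measure.dirac (ξ i) {ξ j}) (by simp) (mem_univ j)

instance isFiniteMeasure_empirical (ξ : Fin S → α) : IsFiniteMeasure (empirical ξ) := by
  unfold empirical
  rcases eq_or_ne S 0 with rfl | hS
  · simp only [Finset.univ_eq_empty, Finset.sum_empty, smul_zero]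
    infer_instance
  · exact Measure.smul_finite _ (by simp [hS])

theorem empirical_absolutelyContinuous_iff (ξ : Fin S → α) (ν : Measure α) :
    empirical ξ ≪ ν ↔ ∀ j, ν {ξ j} ≠ 0 := by
  refine ⟨fun hac j h0 => empirical_singleton_ne_zero ξ j (hac h0), fun hν => ?_⟩
  refine Measure.AbsolutelyContinuous.mk fun s hs h0 => ?_
  have hj : ∀ j, ξ j ∉ s := fun j hmem =>
    hν j (measure_mono_null (Set.singleton_subset_iff.2 hmem) h0)
  simp [empirical_apply, Measure.dirac_apply' _ hs, hj]

theorem toReal_rnDeriv_of_singleton_ne_zero (μ ν : Measure α) [IsFiniteMeasure μ]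
    [IsFiniteMeasure ν] (hac : μ ≪ ν) {x : α} (hx : ν {x} ≠ 0) :
    (μ.rnDeriv ν x).toReal = (μ {x}).toReal / (ν {x}).toReal := by
  have key : ν {x} * μ.rnDeriv ν x = μ {x} := by
    rw [mul_comm, ← Measure.setLIntegral_rnDeriv hac {x}, lintegral_singleton]
  rw [(ENNReal.eq_div_iff hx (measure_ne_top ν {x})).2 key, ENNReal.toReal_div]

theorem relEntropy_empirical (ξ : Fin S → α) (ν : Measure α) [IsFiniteMeasure ν]
    (hac : empirical ξ ≪ ν) :
    relEntropy (empirical ξ) ν =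
      (((S : ℝ)⁻¹ * ∑ j, Real.log ((empirical ξ {ξ j}).toReal / (ν {ξ j}).toReal) : ℝ) :
        EReal) := by
  have hν := (empirical_absolutelyContinuous_iff ξ ν).1 hac
  rw [relEntropy, if_pos hac, integral_empirical]
  simp only [toReal_rnDeriv_of_singleton_ne_zero _ _ hac (hν _)]

theorem relEntropy_empirical_le_of_singleton_le (ξ : Fin S → α)
    {ν₁ ν₂ : Measure α} [IsFiniteMeasure ν₁] [IsFiniteMeasure ν₂] (hac : empirical ξ ≪ ν₁)
    (hle : ∀ j, ν₁ {ξ j} ≤ ν₂ {ξ j}) :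
    relEntropy (empirical ξ) ν₂ ≤ relEntropy (empirical ξ) ν₁ := by
  have hν₁ := (empirical_absolutelyContinuous_iff ξ ν₁).1 hac
  have hac₂ : empirical ξ ≪ ν₂ := (empirical_absolutelyContinuous_iff ξ ν₂).2 fun j h0 =>
    hν₁ j (le_antisymm (h0 ▸ hle j) zero_le)
  rw [relEntropy_empirical ξ ν₁ hac, relEntropy_empirical ξ ν₂ hac₂, EReal.coe_le_coe_iff]
  refine mul_le_mul_of_nonneg_left (Finset.sum_le_sum fun j _ => ?_) (by positivity)
  have he := ENNReal.toReal_pos (empirical_singleton_ne_zero ξ j) (measure_ne_top _ _)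
  have h₁ := ENNReal.toReal_pos (hν₁ j) (measure_ne_top _ _)
  have h₁₂ := (ENNReal.toReal_le_toReal (measure_ne_top _ _) (measure_ne_top _ _)).2 (hle j)
  exact Real.log_le_log (div_pos he (h₁.trans_le h₁₂)) (by gcongr)

theorem empirical_mem_ambiguity (hS : S ≠ 0) {Ξ : Set α} (ξ : Fin S → α) (hξ : ∀ j, ξ j ∈ Ξ)
    {r : ℝ} (hr : 0 ≤ r) : empirical ξ ∈ ambiguity Ξ r (empirical ξ) := by
  have := isProbabilityMeasure_empirical hS ξ
  refine ⟨this, by simp [empirical_apply, Measure.dirac_apply, hξ], ?_⟩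
  rw [relEntropy_empirical ξ _ Measure.AbsolutelyContinuous.rfl]
  have hlog : ∀ j, Real.log ((empirical ξ {ξ j}).toReal / (empirical ξ {ξ j}).toReal) = 0 :=
    fun j => by
      rw [div_self (ENNReal.toReal_pos (empirical_singleton_ne_zero ξ j)
        (measure_ne_top _ _)).ne', Real.log_one]
  simpa [hlog] using hr

end Empirical

section Collapse

variable {α : Type*} [MeasurableSpace α] [MeasurableSingletonClass α] {R : Set α} {x₀ : α}
  {ν : Measure α}

theorem collapseOutside_apply (hR : MeasurableSet R) (s : Set α) :
    collapseOutside R x₀ ν s = ν (s ∩ R) + (1 - ν R) * Measure.dirac x₀ s := by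
  simp [collapseOutside, Measure.restrict_apply' hR]

theorem isProbabilityMeasure_collapseOutside [IsProbabilityMeasure ν] (hR : MeasurableSet R) :
    IsProbabilityMeasure (collapseOutside R x₀ ν) :=
  ⟨by simp [collapseOutside_apply hR, add_tsub_cancel_of_le prob_le_one]⟩

theorem singleton_le_collapseOutside (hR : MeasurableSet R) {x : α} (hx : x ∈ R) :
    ν {x} ≤ collapseOutside R x₀ ν {x} := by
  rw [collapseOutside_apply hR, Set.inter_eq_self_of_subset_left (Set.singleton_subset_iff.2 hx)]
  exact le_self_add

theorem collapseOutside_apply_eq_zero (hR : MeasurableSet R) {s : Set α} (hs : ν (s ∩ R) = 0)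
    (hx₀ : x₀ ∉ s) : collapseOutside R x₀ ν s = 0 := by
  simp [collapseOutside_apply hR, hs, hx₀]

theorem ae_mem_collapseOutside (hR : MeasurableSet R) :
    ∀ᵐ x ∂(collapseOutside R x₀ ν), x ∈ R ∪ {x₀} :=
  mem_ae_iff.2 <| collapseOutside_apply_eq_zero hR
    (measure_mono_null (fun _ hx => hx.1 (Or.inl hx.2)) measure_empty) (by simp)

theorem collapseOutside_mem_ambiguity {S : ℕ} {Ξ : Set α} {ξ : Fin S → α}
    (hx₀ : x₀ ∈ Ξ) {r : ℝ} (hν : ν ∈ ambiguity Ξ r (empirical ξ)) :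
    collapseOutside (Set.range ξ) x₀ ν ∈ ambiguity Ξ r (empirical ξ) := by
  obtain ⟨hprob, hΞ, hent⟩ := hν
  have hR := (Set.finite_range ξ).measurableSet
  have := isProbabilityMeasure_collapseOutside (ν := ν) (x₀ := x₀) hR
  refine ⟨this,
    collapseOutside_apply_eq_zero hR (measure_mono_null Set.inter_subset_left hΞ) (by simpa),
    le_trans ?_ hent⟩
  exact relEntropy_empirical_le_of_singleton_le ξ (absolutelyContinuous_of_relEntropy_le hent)
    fun j => singleton_le_collapseOutside hR (Set.mem_range_self j)

/-- The sublevel sets `{F ≤ q}` below the quantile never contain the maximiser `x₀`, so the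
moved mass does not enter them. -/
theorem quantile_le_quantile_collapseOutside [IsProbabilityMeasure ν] {Ξ : Set α}
    (hR : MeasurableSet R) {a : ℝ} (ha : a < 1) {F : α → ℝ} (hνΞ : ∀ᵐ x ∂ν, x ∈ Ξ)
    (hmax : ∀ x ∈ Ξ, F x ≤ F x₀) (hne : (quantileSet a F ν).Nonempty)
    (hbdd : BddAbove (quantileSet a F (collapseOutside R x₀ ν))) :
    quantile a F ν ≤ quantile a F (collapseOutside R x₀ ν) := by
  refine csSup_le_csSup hbdd hne fun q hq => ?_
  have hqx₀ : x₀ ∉ {x | F x ≤ q} := by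
    simpa using lt_of_mem_quantileSet ha (hνΞ.mono hmax) hq
  calc collapseOutside R x₀ ν {x | F x ≤ q} = ν ({x | F x ≤ q} ∩ R) := by
        simp [collapseOutside_apply hR, hqx₀]
    _ ≤ ν {x | F x ≤ q} := measure_mono Set.inter_subset_left
    _ ≤ ENNReal.ofReal a := hq

end Collapse

theorem exists_isGreatest_of_le_comp {β : Type*} {D : Set β} {f : β → ℝ} {g : β → β}
    (hD : D.Nonempty) (hg : Set.MapsTo g D D) (hfg : ∀ x ∈ D, f x ≤ f (g x))
    (hfin : (f ∘ g '' D).Finite) :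
    ∃ x ∈ D, IsGreatest {v | ∃ y ∈ D, v = f y} (f (g x)) := by
  obtain ⟨_, ⟨x, hx, rfl⟩, hmax⟩ := Set.exists_max_image _ id hfin (hD.image (f ∘ g))
  refine ⟨x, hx, ⟨g x, hg hx, rfl⟩, ?_⟩
  rintro _ ⟨y, hy, rfl⟩
  exact (hfg y hy).trans (hmax _ ⟨y, hy, rfl⟩)

section MaxConstraint

variable {d n m : ℕ} [NeZero m] {h : (Fin d → ℝ) → (Fin n → ℝ) → Fin m → ℝ}

theorem continuous_hbarF (hcont : Continuous fun p : (Fin d → ℝ) × (Fin n → ℝ) => h p.1 p.2)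
    (X : Fin d → ℝ) : Continuous (hbarF h X) := by
  have hℓ : ∀ ℓ : Fin m, Continuous fun ζ => h X ζ ℓ := fun ℓ =>
    (continuous_apply ℓ).comp (hcont.comp (Continuous.prodMk_right X))
  convert Continuous.finset_sup' Finset.univ_nonempty fun ℓ _ => hℓ ℓ using 1
  funext ζ
  rw [hbarF, Finset.sup'_apply]

theorem hstarF_eq_of_isMaxOn {Ξ : Set (Fin n → ℝ)} {X : Fin d → ℝ} {x₀ : Fin n → ℝ}
    (hx₀ : x₀ ∈ Ξ) (hmax : IsMaxOn (hbarF h X) Ξ x₀) : hstarF Ξ h X = hbarF h X x₀ :=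
  IsGreatest.csSup_eq ⟨Set.mem_image_of_mem _ hx₀, Set.forall_mem_image.2 hmax⟩

end MaxConstraint

theorem stmt2_general {n d m S : ℕ} [NeZero m] (hS : 1 ≤ S)
    (Ξ : Set (Fin n → ℝ)) (hΞ : IsCompact Ξ) (hΞne : Ξ.Nonempty)
    (ξ : Fin S → (Fin n → ℝ)) (hξ : ∀ j, ξ j ∈ Ξ)
    (h : (Fin d → ℝ) → (Fin n → ℝ) → Fin m → ℝ)
    (hcont : Continuous fun p : (Fin d → ℝ) × (Fin n → ℝ) => h p.1 p.2)
    (ε r : ℝ) (hε0 : 0 < ε) (hr : 0 < r)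
    (X : Fin d → ℝ) :
    ∃ Pstar ∈ ambiguity Ξ r (empirical ξ),
      Pstar ((Set.range ξ ∪ {ζ ∈ Ξ | hbarF h X ζ = hstarF Ξ h X})ᶜ) = 0 ∧
      quantile (1 - ε) (hbarF h X) Pstar =
        sSup {v : ℝ | ∃ P' ∈ ambiguity Ξ r (empirical ξ),
          v = quantile (1 - ε) (hbarF h X) P'} := by
  set F := hbarF h X
  obtain ⟨x₀, hx₀, hmax⟩ := hΞ.exists_isMaxOn hΞne (continuous_hbarF hcont X).continuousOn
  obtain ⟨lb, hlb⟩ := hΞ.bddBelow_image (continuous_hbarF hcont X).continuousOn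
  have ha : 1 - ε < 1 := by linarith
  set D := ambiguity Ξ r (empirical ξ)
  set g := collapseOutside (Set.range ξ) x₀
  set K := Set.range ξ ∪ {x₀}
  have hK : K.Finite := (Set.finite_range ξ).union (Set.finite_singleton x₀)
  have hR := (Set.finite_range ξ).measurableSet
  have hbounds : ∀ P ∈ D,
      (quantileSet (1 - ε) F P).Nonempty ∧ BddAbove (quantileSet (1 - ε) F P) := by
    rintro P ⟨hprob, hΞP, -⟩
    have hae : ∀ᵐ x ∂P, x ∈ Ξ := mem_ae_iff.2 hΞP
    exact ⟨quantileSet_nonempty_of_ae_le (hae.mono fun x hx => hlb ⟨x, hx, rfl⟩),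
      bddAbove_quantileSet ha (hae.mono fun x hx => hmax hx)⟩
  have hmaps : Set.MapsTo g D D := fun P hP => collapseOutside_mem_ambiguity hx₀ hP
  have hmono : ∀ P ∈ D, quantile (1 - ε) F P ≤ quantile (1 - ε) F (g P) := fun P hP =>
    have := hP.1
    quantile_le_quantile_collapseOutside hR ha (mem_ae_iff.2 hP.2.1) (fun x hx => hmax hx)
      (hbounds P hP).1 (hbounds _ (hmaps hP)).2
  have hfin : (quantile (1 - ε) F ∘ g '' D).Finite := (hK.image F).subset <| by
    rintro _ ⟨P, hP, rfl⟩
    exact quantile_mem_image_of_ae_mem hK (ae_mem_collapseOutside hR) (hbounds _ (hmaps hP)).1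
      (hbounds _ (hmaps hP)).2
  obtain ⟨P, hP, hgreatest⟩ := exists_isGreatest_of_le_comp
    ⟨_, empirical_mem_ambiguity (by omega) ξ hξ hr.le⟩ hmaps hmono hfin
  refine ⟨g P, hmaps hP, collapseOutside_apply_eq_zero hR ?_ ?_, hgreatest.csSup_eq.symm⟩
  · exact measure_mono_null (fun _ hx => hx.1 (Or.inl hx.2)) measure_empty
  · simp [hx₀, hstarF_eq_of_isMaxOn hx₀ hmax, F]

/-- The supremum `sup_{P' ∈ D_r(P̂_S)} q_{1−ε}(h̄(X,·), P')` is attained by a measure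
`P* ∈ D_r(P̂_S)` supported in the union of the sample points and the set
`Ξ*(X)` of maximizers of `h̄(X,·)` over `Ξ`. -/
theorem stmt2 {n d m S : ℕ} [NeZero m] (hS : 1 ≤ S)
    (Ξ : Set (Fin n → ℝ)) (hΞ : IsCompact Ξ) (hΞne : Ξ.Nonempty)
    (ξ : Fin S → (Fin n → ℝ)) (hξ : ∀ j, ξ j ∈ Ξ)
    (h : (Fin d → ℝ) → (Fin n → ℝ) → Fin m → ℝ)
    (hcont : Continuous fun p : (Fin d → ℝ) × (Fin n → ℝ) => h p.1 p.2)
    (ε r : ℝ) (hε0 : 0 < ε) (hε1 : ε ≤ 1) (hr : 0 < r)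
    (X : Fin d → ℝ) :
    ∃ Pstar ∈ ambiguity Ξ r (empirical ξ),
      Pstar ((Set.range ξ ∪ {ζ ∈ Ξ | hbarF h X ζ = hstarF Ξ h X})ᶜ) = 0 ∧
      quantile (1 - ε) (hbarF h X) Pstar =
        sSup {v : ℝ | ∃ P' ∈ ambiguity Ξ r (empirical ξ),
          v = quantile (1 - ε) (hbarF h X) P'} :=
  stmt2_general hS Ξ hΞ hΞne ξ hξ h hcont ε r hε0 hr X
end
end

section
/- Let S ≥ 1 and k ∈ {1,…,S} be integers and let ε satisfy 1 − k/S ≤ ε < 1. Then the minimum of −(1/S)∑_{j=1}^S log(S·p_j) over vectors p ∈ ℝ^{S+1} with p_j ≥ 0 for all j, ∑_{j=1}^{S+1} p_j = 1, and ∑_{j=1}^k p_j ≤ 1−ε, equals −(k/S)·log(S(1−ε)/k) − ((S−k)/S)·log(Sε/(S−k)), where the second term is interpreted as 0 when k = S. When k < S the minimum is attained at p_j = (1−ε)/k for j ∈ {1,…,k}, p_j = ε/(S−k) for j ∈ {k+1,…,S}, and p_{S+1} = 0; when k = S it is attained at p_j = (1−ε)/S for j ∈ {1,…,S} and p_{S+1}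 = ε. -/
/-!
Let `q = pOpt S k ε`. Since `log x ≤ x - 1`, every feasible `p` satisfies
`∑_{j<S} log (S p_j) ≤ ∑_{j<S} log (S q_j) + ∑_{j<S} p_j / q_j - S`, so it suffices that
`∑_{j<S} p_j / q_j ≤ S`. With `A` the mass of `p` on the first `k` coordinates and `B` its mass on
the next `S - k`, that sum is `A k / (1 - ε) + B (S - k) / ε`. It is affine in `(A, B)`, and as
`(S - k) / ε ≤ S ≤ k / (1 - ε)` it is largest at `A = 1 - ε`, `B = ε`, where it equals `S`.
-/

open Finset

noncomputable section

/-- The optimal solution of the minimization problem: for `k < S`, put `(1−ε)/k` on the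
first `k` coordinates, `ε/(S−k)` on coordinates `k+1,…,S`, and `0` on coordinate `S+1`;
for `k = S`, put `(1−ε)/S` on the first `S` coordinates and `ε` on coordinate `S+1`. -/
def pOpt (S k : ℕ) (ε : ℝ) : Fin (S + 1) → ℝ := fun j =>
  if k < S then
    (if (j : ℕ) < k then (1 - ε) / k else if (j : ℕ) < S then ε / ((S : ℝ) - k) else 0)
  else (if (j : ℕ) < S then (1 - ε) / S else ε)

theorem Real.sum_log_le_sum_log_add_sum_div_sub_one {ι : Type*} (s : Finset ι) {p w : ι → ℝ}
    (hp : ∀ i ∈ s, 0 < p i) (hw : ∀ i ∈ s, 0 < w i) :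
    ∑ i ∈ s, Real.log (p i) ≤ ∑ i ∈ s, Real.log (w i) + ∑ i ∈ s, (p i / w i - 1) := by
  rw [← sum_add_distrib]
  gcongr with i hi
  have := Real.log_le_sub_one_of_pos (div_pos (hp i hi) (hw i hi))
  rw [Real.log_div (hp i hi).ne' (hw i hi).ne'] at this
  linarith

theorem Fin.filter_val_lt_filter_val_lt {n l m : ℕ} (h : m ≤ l) :
    ((univ.filter fun j : Fin n => (j : ℕ) < l).filter fun j : Fin n => (j : ℕ) < m) =
      univ.filter fun j : Fin n => (j : ℕ) < m := by
  rw [filter_filter]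
  congr! 2 with j
  omega

theorem Fin.sum_filter_val_lt_const {R : Type*} [NonAssocSemiring R] {n m : ℕ} (h : m ≤ n)
    (c : R) :
    ∑ _j ∈ univ.filter (fun j : Fin n => (j : ℕ) < m), c = m * c := by
  rw [Finset.sum_const, Fin.card_filter_val_lt, min_eq_right h, nsmul_eq_mul]

theorem Fin.sum_filter_val_lt_ite {M : Type*} [AddCommGroup M] {n l m : ℕ} (h : m ≤ l)
    (f g : Fin n → M) :
    ∑ j ∈ univ.filter (fun j : Fin n => (j : ℕ) < l), (if (j : ℕ) < m then f j else g j) =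
      ∑ j ∈ univ.filter (fun j : Fin n => (j : ℕ) < m), f j +
        (∑ j ∈ univ.filter (fun j : Fin n => (j : ℕ) < l), g j -
          ∑ j ∈ univ.filter (fun j : Fin n => (j : ℕ) < m), g j) := by
  rw [sum_ite, Fin.filter_val_lt_filter_val_lt h,
    ← sum_filter_add_sum_filter_not (univ.filter fun j : Fin n => (j : ℕ) < l)
      (fun j : Fin n => (j : ℕ) < m) g, Fin.filter_val_lt_filter_val_lt h, add_sub_cancel_left]

theorem Fin.sum_eq_sum_filter_val_lt_add_last {M : Type*} [AddCommMonoid M] {n : ℕ}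
    (f : Fin (n + 1) → M) :
    ∑ j, f j = ∑ j ∈ univ.filter (fun j : Fin (n + 1) => (j : ℕ) < n), f j + f (last n) := by
  rw [← sum_filter_add_sum_filter_not univ (fun j : Fin (n + 1) => (j : ℕ) < n)]
  congr 1
  rw [show (univ.filter fun j : Fin (n + 1) => ¬(j : ℕ) < n) = {last n} by
    ext j; simp [Fin.ext_iff]; omega]
  exact sum_singleton _ _

theorem sub_le_mul_of_one_sub_div_le {S k ε : ℝ} (hS : 0 < S) (h : 1 - k / S ≤ ε) :
    S - k ≤ S * ε := by
  rw [sub_div' hS.ne', div_le_iff₀ hS] at h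
  linarith

theorem nonneg_of_one_sub_div_le {S k ε : ℝ} (hS : 0 < S) (hkS : k ≤ S) (h : 1 - k / S ≤ ε) :
    0 ≤ ε := by
  linarith [(div_le_one hS).mpr hkS]

section pOpt

variable {S k : ℕ} {ε : ℝ}

theorem pOpt_of_val_lt (hkS : k ≤ S) {j : Fin (S + 1)} (hj : (j : ℕ) < S) :
    pOpt S k ε j = if (j : ℕ) < k then (1 - ε) / k else ε / ((S : ℝ) - k) := by
  unfold pOpt
  split_ifs <;> first | rfl | omega | rw [show S = k by omega]

theorem pOpt_last : pOpt S k ε (Fin.last S) = if k < S then 0 else ε := by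
  simp only [pOpt, Fin.val_last, lt_self_iff_false, if_false]
  split_ifs <;> first | rfl | omega

theorem sum_filter_val_lt_apply_pOpt (hkS : k ≤ S) (F : Fin (S + 1) → ℝ → ℝ) :
    ∑ j ∈ univ.filter (fun j : Fin (S + 1) => (j : ℕ) < S), F j (pOpt S k ε j) =
      ∑ j ∈ univ.filter (fun j : Fin (S + 1) => (j : ℕ) < S),
        (if (j : ℕ) < k then F j ((1 - ε) / k) else F j (ε / ((S : ℝ) - k))) := by
  refine sum_congr rfl fun j hj => ?_
  rw [pOpt_of_val_lt hkS (mem_filter.mp hj).2, apply_ite (F j)]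

theorem pOpt_pos (hk1 : 1 ≤ k) (hkS : k ≤ S) (hε1 : 1 - (k : ℝ) / S ≤ ε) (hε2 : ε < 1)
    {j : Fin (S + 1)} (hj : (j : ℕ) < S) : 0 < pOpt S k ε j := by
  have hk : (0 : ℝ) < k := by exact_mod_cast hk1
  rw [pOpt_of_val_lt hkS hj]
  split_ifs with hjk
  · exact div_pos (sub_pos.mpr hε2) hk
  · have hkS' : (k : ℝ) < S := by exact_mod_cast (by omega : k < S)
    have := sub_le_mul_of_one_sub_div_le (hk.trans hkS') hε1
    exact div_pos (pos_of_mul_pos_right (by linarith) (Nat.cast_nonneg S)) (by linarith)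

theorem pOpt_nonneg (hk1 : 1 ≤ k) (hkS : k ≤ S) (hε1 : 1 - (k : ℝ) / S ≤ ε) (hε2 : ε < 1)
    (j : Fin (S + 1)) : 0 ≤ pOpt S k ε j := by
  by_cases hj : (j : ℕ) < S
  · exact (pOpt_pos hk1 hkS hε1 hε2 hj).le
  obtain rfl : j = Fin.last S := Fin.ext (by have := j.isLt; simp; omega)
  rw [pOpt_last]
  split_ifs
  · rfl
  · exact nonneg_of_one_sub_div_le (by exact_mod_cast (by omega : 0 < S))
      (by exact_mod_cast hkS) hε1

theorem sum_pOpt (hk1 : 1 ≤ k) (hkS : k ≤ S) : ∑ j, pOpt S k ε j = 1 := by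
  have hk : (k : ℝ) ≠ 0 := Nat.cast_ne_zero.mpr (by omega)
  rw [Fin.sum_eq_sum_filter_val_lt_add_last, sum_filter_val_lt_apply_pOpt hkS (fun _ x => x),
    Fin.sum_filter_val_lt_ite hkS, Fin.sum_filter_val_lt_const (by omega),
    Fin.sum_filter_val_lt_const (by omega), Fin.sum_filter_val_lt_const (by omega), pOpt_last]
  split_ifs with hlt
  · have hSk : (S : ℝ) - k ≠ 0 := sub_ne_zero.mpr (by exact_mod_cast hlt.ne')
    field_simp
    ring
  · obtain rfl : S = k := by omega
    rw [sub_self, add_zero, mul_div_cancel₀ _ hk]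
    ring

theorem sum_filter_val_lt_pOpt_eq_one_sub (hk1 : 1 ≤ k) (hkS : k ≤ S) :
    ∑ j ∈ univ.filter (fun j : Fin (S + 1) => (j : ℕ) < k), pOpt S k ε j = 1 - ε := by
  have hk : (k : ℝ) ≠ 0 := Nat.cast_ne_zero.mpr (by omega)
  rw [sum_congr rfl fun j hj => by
      rw [pOpt_of_val_lt hkS ((mem_filter.mp hj).2.trans_le hkS), if_pos (mem_filter.mp hj).2],
    Fin.sum_filter_val_lt_const (by omega), mul_div_cancel₀ _ hk]

theorem neg_one_div_mul_sum_log_pOpt (hk1 : 1 ≤ k) (hkS : k ≤ S) :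
    -(1 / (S : ℝ)) * ∑ j ∈ univ.filter (fun j : Fin (S + 1) => (j : ℕ) < S),
        Real.log ((S : ℝ) * pOpt S k ε j) =
      -((k : ℝ) / S) * Real.log ((S : ℝ) * (1 - ε) / k)
        - (((S : ℝ) - k) / S) * Real.log ((S : ℝ) * ε / ((S : ℝ) - k)) := by
  have hS : (S : ℝ) ≠ 0 := by exact_mod_cast (by omega : S ≠ 0)
  rw [sum_filter_val_lt_apply_pOpt hkS (fun _ x => Real.log (S * x)),
    Fin.sum_filter_val_lt_ite hkS,
    Fin.sum_filter_val_lt_const (by omega), Fin.sum_filter_val_lt_const (by omega),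
    Fin.sum_filter_val_lt_const (by omega), mul_div_assoc, mul_div_assoc]
  field_simp
  ring

theorem sum_filter_val_lt_div_pOpt_le (hk1 : 1 ≤ k) (hkS : k ≤ S) (hε1 : 1 - (k : ℝ) / S ≤ ε)
    (hε2 : ε < 1) {p : Fin (S + 1) → ℝ} (hp0 : ∀ j, 0 ≤ p j) (hp1 : ∑ j, p j = 1)
    (hpk : ∑ j ∈ univ.filter (fun j : Fin (S + 1) => (j : ℕ) < k), p j ≤ 1 - ε) :
    ∑ j ∈ univ.filter (fun j : Fin (S + 1) => (j : ℕ) < S), p j / pOpt S k ε j ≤ S := by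
  have hk : (0 : ℝ) < k := by exact_mod_cast hk1
  have hkS' : (k : ℝ) ≤ S := by exact_mod_cast hkS
  have hS : (0 : ℝ) < S := hk.trans_le hkS'
  have hε : (S : ℝ) - k ≤ S * ε := sub_le_mul_of_one_sub_div_le hS hε1
  have hε0 : 0 ≤ ε := nonneg_of_one_sub_div_le hS hkS' hε1
  rw [sum_filter_val_lt_apply_pOpt hkS (fun j x => p j / x), Fin.sum_filter_val_lt_ite hkS,
    ← sum_div, ← sum_div, ← sum_div, ← sub_div, div_div_eq_mul_div, div_div_eq_mul_div,
    mul_div_assoc, mul_div_assoc]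
  set A := ∑ j ∈ univ.filter (fun j : Fin (S + 1) => (j : ℕ) < k), p j
  set P := ∑ j ∈ univ.filter (fun j : Fin (S + 1) => (j : ℕ) < S), p j
  have hAP : A ≤ P := sum_le_sum_of_subset_of_nonneg
    (fun j => by simp only [mem_filter, mem_univ, true_and]; omega) (fun j _ _ => hp0 j)
  have hP1 : P ≤ 1 := by
    rw [← hp1, Fin.sum_eq_sum_filter_val_lt_add_last]
    linarith [hp0 (Fin.last S)]
  -- with `α = k / (1 - ε)` and `β = (S - k) / ε`, the sum `A α + (P - A) β` is at most
  -- `(1 - ε) α + ε β = S` because `β ≤ S ≤ α`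
  have hα : (S : ℝ) ≤ k / (1 - ε) := (le_div_iff₀ (sub_pos.mpr hε2)).mpr (by linarith)
  have hβ : ((S : ℝ) - k) / ε ≤ S := div_le_of_le_mul₀ hε0 hS.le (by linarith)
  have hβ0 : 0 ≤ ((S : ℝ) - k) / ε := div_nonneg (sub_nonneg.mpr hkS') hε0
  have hkα : (1 - ε) * (k / (1 - ε)) = k := mul_div_cancel₀ _ (sub_pos.mpr hε2).ne'
  have hεβ : ε * (((S : ℝ) - k) / ε) ≤ S - k := by
    rcases hε0.eq_or_lt with rfl | hεpos
    · simpa using hkS'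
    · rw [mul_div_cancel₀ _ hεpos.ne']
  nlinarith [mul_nonneg (sub_nonneg.mpr hpk) (sub_nonneg.mpr (hβ.trans hα)),
    mul_nonneg (sub_nonneg.mpr hP1) hβ0]

theorem sum_filter_val_lt_log_le_log_pOpt (hk1 : 1 ≤ k) (hkS : k ≤ S)
    (hε1 : 1 - (k : ℝ) / S ≤ ε) (hε2 : ε < 1) {p : Fin (S + 1) → ℝ} (hp0 : ∀ j, 0 ≤ p j)
    (hpS : ∀ j : Fin (S + 1), (j : ℕ) < S → 0 < p j) (hp1 : ∑ j, p j = 1)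
    (hpk : ∑ j ∈ univ.filter (fun j : Fin (S + 1) => (j : ℕ) < k), p j ≤ 1 - ε) :
    ∑ j ∈ univ.filter (fun j : Fin (S + 1) => (j : ℕ) < S), Real.log ((S : ℝ) * p j) ≤
      ∑ j ∈ univ.filter (fun j : Fin (S + 1) => (j : ℕ) < S),
        Real.log ((S : ℝ) * pOpt S k ε j) := by
  have hS : (0 : ℝ) < S := by exact_mod_cast (by omega : 0 < S)
  have hgibbs := Real.sum_log_le_sum_log_add_sum_div_sub_one
    (univ.filter fun j : Fin (S + 1) => (j : ℕ) < S)
    (fun j hj => mul_pos hS (hpS j (mem_filter.mp hj).2))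
    (fun j hj => mul_pos hS (pOpt_pos hk1 hkS hε1 hε2 (mem_filter.mp hj).2))
  simp only [mul_div_mul_left _ _ hS.ne', sum_sub_distrib,
    Fin.sum_filter_val_lt_const (Nat.le_succ S), mul_one] at hgibbs
  linarith [sum_filter_val_lt_div_pOpt_le hk1 hkS hε1 hε2 hp0 hp1 hpk]

end pOpt

theorem stmt5_general (S k : ℕ) (hk1 : 1 ≤ k) (hkS : k ≤ S) (ε : ℝ)
    (hε1 : 1 - (k : ℝ) / S ≤ ε) (hε2 : ε < 1) :
    IsLeast
      {v : ℝ | ∃ p : Fin (S + 1) → ℝ,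
        (∀ j, 0 ≤ p j) ∧ (∀ j : Fin (S + 1), (j : ℕ) < S → 0 < p j) ∧
        (∑ j, p j) = 1 ∧
        (∑ j ∈ Finset.univ.filter (fun j : Fin (S + 1) => (j : ℕ) < k), p j) ≤ 1 - ε ∧
        v = -(1 / (S : ℝ)) * ∑ j ∈ Finset.univ.filter (fun j : Fin (S + 1) => (j : ℕ) < S),
              Real.log ((S : ℝ) * p j)}
      (-((k : ℝ) / S) * Real.log ((S : ℝ) * (1 - ε) / k)
        - (((S : ℝ) - k) / S) * Real.log ((S : ℝ) * ε / ((S : ℝ) - k))) ∧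
    (∀ j, 0 ≤ pOpt S k ε j) ∧
    (∀ j : Fin (S + 1), (j : ℕ) < S → 0 < pOpt S k ε j) ∧
    (∑ j, pOpt S k ε j) = 1 ∧
    (∑ j ∈ Finset.univ.filter (fun j : Fin (S + 1) => (j : ℕ) < k), pOpt S k ε j) ≤ 1 - ε ∧
    -(1 / (S : ℝ)) * ∑ j ∈ Finset.univ.filter (fun j : Fin (S + 1) => (j : ℕ) < S),
        Real.log ((S : ℝ) * pOpt S k ε j) =
      -((k : ℝ) / S) * Real.log ((S : ℝ) * (1 - ε) / k)
        - (((S : ℝ) - k) / S) * Real.log ((S : ℝ) * ε / ((S : ℝ) - k)) := by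
  have hnonneg := pOpt_nonneg hk1 hkS hε1 hε2
  have hpos := fun j => pOpt_pos (j := j) hk1 hkS hε1 hε2
  have hsum := sum_pOpt (ε := ε) hk1 hkS
  have hmass := (sum_filter_val_lt_pOpt_eq_one_sub (ε := ε) hk1 hkS).le
  have hvalue := neg_one_div_mul_sum_log_pOpt (ε := ε) hk1 hkS
  refine ⟨⟨⟨pOpt S k ε, hnonneg, hpos, hsum, hmass, hvalue.symm⟩, ?_⟩,
    hnonneg, hpos, hsum, hmass, hvalue⟩
  rintro v ⟨p, hp0, hpS, hp1, hpk, rfl⟩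
  rw [← hvalue, neg_mul, neg_mul, neg_le_neg_iff]
  exact mul_le_mul_of_nonneg_left
    (sum_filter_val_lt_log_le_log_pOpt hk1 hkS hε1 hε2 hp0 hpS hp1 hpk) (by positivity)

/-- The minimum of `−(1/S)∑_{j=1}^S log(S·p_j)` over the feasible set equals
`−(k/S)·log(S(1−ε)/k) − ((S−k)/S)·log(Sε/(S−k))` and is attained at `pOpt`. -/
theorem stmt5 (S k : ℕ) (hS : 1 ≤ S) (hk1 : 1 ≤ k) (hkS : k ≤ S) (ε : ℝ)
    (hε1 : 1 - (k : ℝ) / S ≤ ε) (hε2 : ε < 1) :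
    IsLeast
      {v : ℝ | ∃ p : Fin (S + 1) → ℝ,
        (∀ j, 0 ≤ p j) ∧ (∀ j : Fin (S + 1), (j : ℕ) < S → 0 < p j) ∧
        (∑ j, p j) = 1 ∧
        (∑ j ∈ Finset.univ.filter (fun j : Fin (S + 1) => (j : ℕ) < k), p j) ≤ 1 - ε ∧
        v = -(1 / (S : ℝ)) * ∑ j ∈ Finset.univ.filter (fun j : Fin (S + 1) => (j : ℕ) < S),
              Real.log ((S : ℝ) * p j)}
      (-((k : ℝ) / S) * Real.log ((S : ℝ) * (1 - ε) / k)
        - (((S : ℝ) - k) / S) * Real.log ((S : ℝ) * ε / ((S : ℝ) - k))) ∧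
    (∀ j, 0 ≤ pOpt S k ε j) ∧
    (∀ j : Fin (S + 1), (j : ℕ) < S → 0 < pOpt S k ε j) ∧
    (∑ j, pOpt S k ε j) = 1 ∧
    (∑ j ∈ Finset.univ.filter (fun j : Fin (S + 1) => (j : ℕ) < k), pOpt S k ε j) ≤ 1 - ε ∧
    -(1 / (S : ℝ)) * ∑ j ∈ Finset.univ.filter (fun j : Fin (S + 1) => (j : ℕ) < S),
        Real.log ((S : ℝ) * pOpt S k ε j) =
      -((k : ℝ) / S) * Real.log ((S : ℝ) * (1 - ε) / k)
        - (((S : ℝ) - k) / S) * Real.log ((S : ℝ) * ε / ((S : ℝ) - k)) :=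
  stmt5_general S k hk1 hkS ε hε1 hε2
end
end

section
/- Let S ≥ 1 and m ≥ 1 be integers, let a_{ℓj} ∈ ℝ for ℓ ∈ {1,…,m} and j ∈ {1,…,S}, let k ∈ {1,…,S}, and let C > 0 satisfy C > a_{ℓj} for all ℓ, j. Then there exists b ∈ {0,1}^S with ∑_{j=1}^S b_j ≤ S−k and a_{ℓj} ≤ C·b_j for all ℓ ∈ {1,…,m} and j ∈ {1,…,S}, if and only if the k-th smallest of the values (max_{ℓ∈{1,…,m}} a_{ℓj})_{j=1,…,S} (counted with multiplicity) is at most 0. -/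
open Finset

noncomputable section

/-! In a sorted list the entries `≤ x` form a prefix, so the `k`-th smallest value is `≤ x` iff
at least `k` values are. A feasible binary `b` must be `1` on every column whose maximum is
positive, and since every `a ℓ j < C`, the indicator of those columns is feasible; so feasibility
says that at most `S - k` column maxima are positive, i.e. at least `k` are `≤ 0`. -/

theorem List.SortedLE.getElem_le_iff_lt_countP {α : Type*} [LinearOrder α] {L : List α}
    (hL : L.SortedLE) {i : ℕ} (hi : i < L.length) (x : α) :
    L[i] ≤ x ↔ i < L.countP (· ≤ x) := by
  constructor
  · intro hix
    have htake : (L.take (i + 1)).countP (· ≤ x) = i + 1 := by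
      rw [List.countP_eq_length.2, List.length_take]
      · omega
      intro y hy
      obtain ⟨j, hj, rfl⟩ := List.mem_take_iff_getElem.1 hy
      simpa using (hL.getElem_le_getElem_of_le (by omega)).trans hix
    have := (L.take_sublist (i + 1)).countP_le (p := (· ≤ x))
    omega
  · intro hcount
    by_contra! hxi
    have hdrop : (L.drop i).countP (· ≤ x) = 0 := by
      refine List.countP_eq_zero.2 fun y hy => ?_
      obtain ⟨j, hj, rfl⟩ := List.mem_drop_iff_getElem.1 hy
      simpa using hxi.trans_le (hL.getElem_le_getElem_of_le (by omega))
    have : L.countP (· ≤ x) ≤ i := by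
      rw [← L.take_append_drop i, List.countP_append, hdrop, add_zero]
      exact List.countP_le_length.trans (List.length_take_le _ _)
    omega

theorem kthSmallest_le_iff {N : ℕ} (v : Fin N → ℝ) {k : ℕ} (hk1 : 1 ≤ k) (hkN : k ≤ N)
    (x : ℝ) : kthSmallest v k ≤ x ↔ k ≤ #{j | v j ≤ x} := by
  have hcount : Multiset.countP (· ≤ x) (Multiset.ofList (List.ofFn v)) = #{j | v j ≤ x} := by
    rw [← Fin.univ_val_map, Multiset.countP_map]
    rfl
  have hlen : (Multiset.sort (Multiset.ofList (List.ofFn v)) (· ≤ ·)).length = N := by simp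
  rw [kthSmallest, List.getD_eq_getElem _ _ (by omega),
    (Multiset.pairwise_sort _ _).sortedLE.getElem_le_iff_lt_countP, ← Multiset.coe_countP,
    Multiset.sort_eq, hcount]
  omega

theorem exists_binary_le_mul_iff {ι : Type*} [Fintype ι] (g : ι → ℝ) {C : ℝ}
    (hC : ∀ j, g j < C) (r : ℕ) :
    (∃ b : ι → ℕ, (∀ j, b j ≤ 1) ∧ ∑ j, b j ≤ r ∧ ∀ j, g j ≤ C * b j) ↔
      #{j | 0 < g j} ≤ r := by
  constructor
  · rintro ⟨b, -, hsum, hgb⟩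
    have hpos : ∀ j ∈ ({j | 0 < g j} : Finset ι), 1 ≤ b j := fun j hj => by
      refine Nat.one_le_iff_ne_zero.2 fun hb => ?_
      have := hgb j
      rw [hb, Nat.cast_zero, mul_zero] at this
      exact (mem_filter.1 hj).2.not_ge this
    calc #{j | 0 < g j} = ∑ j ∈ {j | 0 < g j}, 1 := card_eq_sum_ones _
      _ ≤ ∑ j ∈ {j | 0 < g j}, b j := sum_le_sum hpos
      _ ≤ ∑ j, b j := sum_le_sum_of_subset (subset_univ _)
      _ ≤ r := hsum
  · intro hcard
    refine ⟨fun j => if 0 < g j then 1 else 0, fun j => ?_, ?_, fun j => ?_⟩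
    · dsimp only
      split_ifs <;> omega
    · rwa [sum_boole, Nat.cast_id]
    · dsimp only
      split_ifs with h
      · simpa using (hC j).le
      · simpa using not_lt.1 h

theorem stmt11_general {S m : ℕ} (hm : 1 ≤ m)
    (a : Fin m → Fin S → ℝ) (k : ℕ) (hk1 : 1 ≤ k) (hkS : k ≤ S)
    (C : ℝ) (hC : ∀ ℓ j, a ℓ j < C) :
    (∃ b : Fin S → ℕ,
      (∀ j, b j ≤ 1) ∧ (∑ j, b j) ≤ S - k ∧
      ∀ ℓ j, a ℓ j ≤ C * (b j : ℝ)) ↔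
    kthSmallest
      (fun j => Finset.univ.sup' ⟨⟨0, hm⟩, Finset.mem_univ _⟩ fun ℓ => a ℓ j) k ≤ 0 := by
  set g : Fin S → ℝ := fun j => univ.sup' ⟨⟨0, hm⟩, mem_univ _⟩ fun ℓ => a ℓ j
  have hcol (b : Fin S → ℕ) : (∀ ℓ j, a ℓ j ≤ C * b j) ↔ ∀ j, g j ≤ C * b j := by
    rw [forall_comm]
    exact forall_congr' fun j =>
      ⟨fun h => sup'_le _ _ fun ℓ _ => h ℓ, fun h ℓ => (le_sup' _ (mem_univ ℓ)).trans h⟩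
  have hgC (j : Fin S) : g j < C := (sup'_lt_iff _).2 fun ℓ _ => hC ℓ j
  have hsplit := card_filter_add_card_filter_not (s := univ) (fun j => g j ≤ 0)
  simp only [hcol, exists_binary_le_mul_iff g hgC, kthSmallest_le_iff g hk1 hkS, not_le,
    card_univ, Fintype.card_fin] at hsplit ⊢
  omega

/-- Per-point content of the big-M reformulation: with a sufficiently large constant `C`,
there is a binary vector `b` with at most `S − k` ones satisfying `a_{ℓj} ≤ C·b_j` for all
`ℓ, j`, iff the `k`-th smallest of the columnwise maxima `max_ℓ a_{ℓj}` is at most `0`. -/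
theorem stmt11 {S m : ℕ} (hS : 1 ≤ S) (hm : 1 ≤ m)
    (a : Fin m → Fin S → ℝ) (k : ℕ) (hk1 : 1 ≤ k) (hkS : k ≤ S)
    (C : ℝ) (hC0 : 0 < C) (hC : ∀ ℓ j, a ℓ j < C) :
    (∃ b : Fin S → ℕ,
      (∀ j, b j ≤ 1) ∧ (∑ j, b j) ≤ S - k ∧
      ∀ ℓ j, a ℓ j ≤ C * (b j : ℝ)) ↔
    kthSmallest
      (fun j => Finset.univ.sup' ⟨⟨0, hm⟩, Finset.mem_univ _⟩ fun ℓ => a ℓ j) k ≤ 0 :=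
  stmt11_general hm a k hk1 hkS C hC
end
end
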